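/- arXiv:1401.2572 — 3 statements merged into one kernel-verified Lean document; each statement's English description precedes it below -/
import Mathlib

section
/- The Fuss–Catalan numbers m_p = binomial(rp+p, p)/(rp+1) satisfy the recurrence m_p = sum over (q_1,...,q_{r+1}) of nonnegative integers with q_1+...+q_{r+1} = p-1 of m_{q_1}···m_{q_{r+1}}, for all p ≥ 1, with m_0 = 1. -/
noncomputable def fcA (t s n : ℕ) : ℚ :=
  if n = 0 then 1 else (s : ℚ) * (Nat.choose (s + t * n) n : ℚ) / (s + t * n)

lemma fcA_zero_right (t s : ℕ) : fcA t s 0 = 1 := by simp [fcA]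

lemma fcA_zero_left (t n : ℕ) (hn : n ≠ 0) : fcA t 0 n = 0 := by
  simp [fcA, hn]

lemma fcA_of_pos (t s n : ℕ) (hs : 0 < s) :
    fcA t s n = (s : ℚ) * (Nat.choose (s + t * n) n : ℚ) / (s + t * n) := by
  rcases n with _ | n
  · simp [fcA]
    rw [eq_div_iff (by positivity)]
    ring
  · simp [fcA]

lemma choose_cast_one (M N : ℕ) :
    ((M : ℚ) + 1) * (Nat.choose M N : ℚ) = (Nat.choose (M + 1) (N + 1) : ℚ) * (N + 1) := by
  exact_mod_cast congrArg (Nat.cast (R := ℚ)) (Nat.add_one_mul_choose_eq M N)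

lemma choose_cast_two (M N : ℕ) :
    ((M : ℚ) + 1) * (Nat.choose M (N + 1) : ℚ)
      = (Nat.choose (M + 1) (N + 1) : ℚ) * ((M : ℚ) + 1) - (Nat.choose (M + 1) (N + 1) : ℚ) * (N + 1) := by
  have hp : (Nat.choose (M + 1) (N + 1) : ℚ) = Nat.choose M N + Nat.choose M (N + 1) := by
    exact_mod_cast congrArg (Nat.cast (R := ℚ)) (Nat.choose_succ_succ M N)
  have h1 := choose_cast_one M N
  nlinarith [h1, hp]

lemma fcA_of_ne (t s n : ℕ) (hn : n ≠ 0) :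
    fcA t s n = (s : ℚ) * (Nat.choose (s + t * n) n : ℚ) / (s + t * n) := by
  simp [fcA, hn]

lemma fcA_rec (t : ℕ) (ht : 1 ≤ t) (s n : ℕ) :
    fcA t (s + 1) (n + 1) = fcA t s (n + 1) + fcA t (s + t) n := by
  have hM1 : s + 1 + t * (n + 1) = (s + t * (n + 1)) + 1 := by ring
  have hM2 : s + t + t * n = s + t * (n + 1) := by ring
  rw [fcA_of_ne t (s + 1) (n + 1) (by omega), fcA_of_pos t (s + t) n (by omega),
    fcA_of_ne t s (n + 1) (by omega)]
  rw [hM1, hM2]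
  have e1 := choose_cast_one (s + t * (n + 1)) n
  have e2 := choose_cast_two (s + t * (n + 1)) n
  have hMpos : (0 : ℚ) < ((s + t * (n + 1) : ℕ) : ℚ) := by
    have : 0 < s + t * (n + 1) := by positivity
    exact_mod_cast this
  set a := (Nat.choose ((s + t * (n + 1)) + 1) (n + 1) : ℚ) with ha
  set b := (Nat.choose (s + t * (n + 1)) (n + 1) : ℚ) with hb
  set c := (Nat.choose (s + t * (n + 1)) n : ℚ) with hc
  have hMQ : ((s + t * (n + 1) : ℕ) : ℚ) = (s : ℚ) + t * (n + 1) := by push_cast; ring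
  push_cast
  rw [hMQ] at e1 e2 hMpos
  have h1 : (s : ℚ) + t * (n + 1) ≠ 0 := ne_of_gt hMpos
  have h2 : (s : ℚ) + 1 + t * (n + 1) ≠ 0 := by positivity
  have h3 : (s : ℚ) + t + t * n ≠ 0 := by
    have : (s : ℚ) + t + t * n = s + t * (n+1) := by ring
    rw [this]; exact h1
  have hd : (s:ℚ) + t + t*n = (s:ℚ) + t*(n+1) := by ring
  rw [hd, ← add_div, div_eq_div_iff h2 h1]
  linear_combination (-(s:ℚ))*e2 + (-((s:ℚ)+(t:ℚ)))*e1

lemma fcA_conv (t : ℕ) (ht : 1 ≤ t) (n : ℕ) : ∀ s : ℕ,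
    ∑ k ∈ Finset.range (n + 1), fcA t s k * fcA t 1 (n - k) = fcA t (s + 1) n := by
  induction n with
  | zero => intro s; simp [fcA_zero_right]
  | succ n IH =>
    intro s
    induction s with
    | zero =>
      rw [Finset.sum_eq_single_of_mem 0 (Finset.mem_range.mpr (by omega))]
      · simp [fcA_zero_right]
      · intro b _ hb
        rw [fcA_zero_left t b hb, zero_mul]
    | succ s IHs =>
      have split : ∀ k ∈ Finset.range (n + 2),
          fcA t (s + 1) k * fcA t 1 (n + 1 - k)
            = fcA t s k * fcA t 1 (n + 1 - k)
              + (if k = 0 then 0 else fcA t (s + t) (k - 1)) * fcA t 1 (n + 1 - k) := by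
        intro k _
        rcases k with _ | k
        · simp [fcA_zero_right]
        · simp only [Nat.succ_ne_zero, if_false, Nat.add_sub_cancel]
          rw [fcA_rec t ht s k, add_mul]
      rw [Finset.sum_congr rfl split, Finset.sum_add_distrib, IHs]
      have h2 : ∑ k ∈ Finset.range (n + 2),
          (if k = 0 then 0 else fcA t (s + t) (k - 1)) * fcA t 1 (n + 1 - k)
          = fcA t (s + t + 1) n := by
        rw [Finset.sum_range_succ']
        simpa using IH (s + t)
      rw [h2]
      have hst : s + t + 1 = s + 1 + t := by omega
      rw [hst, ← fcA_rec t ht (s + 1) n]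

lemma tuple_succ_sum (f : ℕ → ℚ) (k n : ℕ) :
    ∑ q ∈ Finset.Nat.antidiagonalTuple (k + 1) n, ∏ i, f (q i)
      = ∑ p ∈ Finset.HasAntidiagonal.antidiagonal n,
          f p.1 * ∑ q ∈ Finset.Nat.antidiagonalTuple k p.2, ∏ i, f (q i) := by
  simp_rw [Finset.mul_sum]
  rw [Finset.sum_sigma']
  refine Finset.sum_bij'
    (fun q _ => (⟨(q 0, ∑ i, q (Fin.succ i)), fun i => q (Fin.succ i)⟩ :
        Σ p : ℕ × ℕ, Fin k → ℕ))
    (fun x _ => Fin.cons x.1.1 x.2) ?_ ?_ ?_ ?_ ?_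
  · intro q hq
    rw [Finset.Nat.mem_antidiagonalTuple] at hq
    simp only [Finset.mem_sigma, Finset.Nat.mem_antidiagonalTuple, Finset.HasAntidiagonal.mem_antidiagonal]
    exact ⟨by rw [← hq, Fin.sum_univ_succ], trivial⟩
  · intro x hx
    simp only [Finset.mem_sigma, Finset.Nat.mem_antidiagonalTuple,
      Finset.HasAntidiagonal.mem_antidiagonal] at hx
    rw [Finset.Nat.mem_antidiagonalTuple, Fin.sum_univ_succ]
    rw [Fin.cons_zero]
    simp only [Fin.cons_succ]
    rw [hx.2, hx.1]
  · intro q hq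
    exact Fin.cons_self_tail q
  · intro x hx
    simp only [Finset.mem_sigma, Finset.Nat.mem_antidiagonalTuple,
      Finset.HasAntidiagonal.mem_antidiagonal] at hx
    obtain ⟨⟨a, b⟩, q⟩ := x
    simp only [Fin.cons_zero, Fin.cons_succ]
    obtain ⟨h1, h2⟩ := hx
    simp at h2 ⊢
    exact h2
  · intro q hq
    dsimp only
    rw [Fin.prod_univ_succ]


lemma fcA_tuple (t : ℕ) (ht : 1 ≤ t) : ∀ k n : ℕ,
    ∑ q ∈ Finset.Nat.antidiagonalTuple k n, ∏ i, fcA t 1 (q i) = fcA t k n := by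
  intro k
  induction k with
  | zero =>
    intro n
    rcases n with _ | n
    · simp [Finset.Nat.antidiagonalTuple_zero_zero, fcA_zero_right]
    · simp [Finset.Nat.antidiagonalTuple_zero_succ, fcA_zero_left t (n+1) (Nat.succ_ne_zero n)]
  | succ k IH =>
    intro n
    rw [tuple_succ_sum]
    have : ∀ p ∈ Finset.HasAntidiagonal.antidiagonal n,
        fcA t 1 p.1 * ∑ q ∈ Finset.Nat.antidiagonalTuple k p.2, ∏ i, fcA t 1 (q i)
          = fcA t 1 p.1 * fcA t k p.2 := by
      intro p _
      rw [IH p.2]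
    rw [Finset.sum_congr rfl this]
    have hswap : ∑ x ∈ Finset.HasAntidiagonal.antidiagonal n, fcA t 1 x.1 * fcA t k x.2
        = ∑ x ∈ Finset.HasAntidiagonal.antidiagonal n, fcA t k x.1 * fcA t 1 x.2 := by
      rw [← Finset.HasAntidiagonal.map_swap_antidiagonal (n := n), Finset.sum_map]
      simp [mul_comm]
    rw [hswap, Finset.Nat.sum_antidiagonal_eq_sum_range_succ_mk]
    simpa using fcA_conv t ht n k

lemma choose_key (a k : ℕ) :
    Nat.choose a (k + 1) * (a + 1) = Nat.choose (a + 1) (k + 1) * (a - k) := by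
  refine Nat.eq_of_mul_eq_mul_right (Nat.succ_pos k) ?_
  calc Nat.choose a (k+1) * (a+1) * (k+1)
      = (Nat.choose a (k+1) * (k+1)) * (a+1) := by ring
    _ = (Nat.choose a k * (a - k)) * (a+1) := by rw [Nat.choose_succ_right_eq]
    _ = ((a+1) * Nat.choose a k) * (a - k) := by ring
    _ = (Nat.choose (a+1) (k+1) * (k+1)) * (a - k) := by rw [Nat.add_one_mul_choose_eq]
    _ = Nat.choose (a+1) (k+1) * (a - k) * (k+1) := by ring

/-- The Fuss–Catalan numbers `m_p = binom((r+1)p, p)/(rp+1)` satisfy the convolution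
recurrence `m_p = ∑_{q_1+⋯+q_{r+1}=p-1} m_{q_1} ⋯ m_{q_{r+1}}` for `p ≥ 1`, with `m_0 = 1`. -/
theorem fussCatalan_recurrence (r : ℕ) (hr : 0 < r) (m : ℕ → ℚ)
    (hm : ∀ p : ℕ, m p = (Nat.choose ((r + 1) * p) p : ℚ) / (r * p + 1)) :
    m 0 = 1 ∧ ∀ p : ℕ, 1 ≤ p →
      m p = ∑ q ∈ Finset.Nat.antidiagonalTuple (r + 1) (p - 1), ∏ i, m (q i) := by
  have ht : 1 ≤ r + 1 := by omega
  have key : ∀ j, m j = fcA (r + 1) 1 j := by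
    intro j
    rcases j with _ | k
    · rw [hm]; simp [fcA_zero_right]
    · rw [hm, fcA_of_ne (r+1) 1 (k+1) (Nat.succ_ne_zero k)]
      have hsub : (r+1) * (k+1) - k = r * (k+1) + 1 := by
        have : (r+1)*(k+1) = r*(k+1) + (k+1) := by ring
        omega
      have hnat : Nat.choose ((r+1)*(k+1)) (k+1) * ((r+1)*(k+1) + 1)
          = Nat.choose ((r+1)*(k+1) + 1) (k+1) * (r*(k+1) + 1) := by
        rw [← hsub]; exact choose_key ((r+1)*(k+1)) k
      have h1 : (0:ℚ) < (r:ℚ) * (k+1) + 1 := by positivity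
      have h2 : (0:ℚ) < 1 + ((r:ℚ)+1) * (k+1) := by positivity
      have harg : 1 + (r+1) * (k+1) = (r+1)*(k+1) + 1 := by omega
      rw [harg, div_eq_div_iff (by positivity) (by positivity)]
      have hQ : ((Nat.choose ((r+1)*(k+1)) (k+1) * ((r+1)*(k+1) + 1) : ℕ) : ℚ)
          = ((Nat.choose ((r+1)*(k+1) + 1) (k+1) * (r*(k+1) + 1) : ℕ) : ℚ) := by
        exact_mod_cast congrArg (Nat.cast (R := ℚ)) hnat
      push_cast at hQ ⊢
      linear_combination hQ
  have last : ∀ p : ℕ, 1 ≤ p → fcA (r+1) (r+1) (p - 1) = m p := by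
    intro p hp
    obtain ⟨k, rfl⟩ : ∃ k, p = k + 1 := ⟨p - 1, by omega⟩
    simp only [Nat.add_sub_cancel]
    rw [hm, fcA_of_pos (r+1) (r+1) k (by omega)]
    have harg : (r+1) + (r+1) * k = (r+1) * (k+1) := by ring
    rw [harg]
    have hnat : (r+1) * (Nat.choose ((r+1)*(k+1)) k) * (r*(k+1)+1)
        = Nat.choose ((r+1)*(k+1)) (k+1) * ((r+1)*(k+1)) := by
      have h1 : Nat.choose ((r+1)*(k+1)) (k+1) * (k+1)
          = Nat.choose ((r+1)*(k+1)) k * ((r+1)*(k+1) - k) := Nat.choose_succ_right_eq _ k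
      have hsub : (r+1) * (k+1) - k = r * (k+1) + 1 := by
        have : (r+1)*(k+1) = r*(k+1) + (k+1) := by ring
        omega
      rw [hsub] at h1
      calc (r+1) * (Nat.choose ((r+1)*(k+1)) k) * (r*(k+1)+1)
          = (r+1) * (Nat.choose ((r+1)*(k+1)) k * (r*(k+1)+1)) := by ring
        _ = (r+1) * (Nat.choose ((r+1)*(k+1)) (k+1) * (k+1)) := by rw [h1]
        _ = Nat.choose ((r+1)*(k+1)) (k+1) * ((r+1)*(k+1)) := by ring
    have h1 : (0:ℚ) < ((r:ℚ)+1) + ((r:ℚ)+1) * k := by positivity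
    have h2 : (0:ℚ) < (r:ℚ) * (k+1) + 1 := by positivity
    rw [div_eq_div_iff (by positivity) (by positivity)]
    have hQ : (((r+1) * (Nat.choose ((r+1)*(k+1)) k) * (r*(k+1)+1) : ℕ) : ℚ)
        = ((Nat.choose ((r+1)*(k+1)) (k+1) * ((r+1)*(k+1)) : ℕ) : ℚ) := by
      exact_mod_cast congrArg (Nat.cast (R := ℚ)) hnat
    push_cast at hQ ⊢
    linear_combination hQ
  constructor
  · rw [hm]; simp
  · intro p hp
    have : ∀ q ∈ Finset.Nat.antidiagonalTuple (r + 1) (p - 1),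
        ∏ i, m (q i) = ∏ i, fcA (r+1) 1 (q i) := by
      intro q _
      exact Finset.prod_congr rfl fun i _ => key (q i)
    rw [Finset.sum_congr rfl this, fcA_tuple (r+1) ht (r+1) (p-1), last p hp]
end

section
/- For the Marchenko–Pastur density ρ(y) = (1/(π√y))·√(1 - y/4) on (0,4), the Stieltjes transform G(z) = ∫_0^4 ρ(y)/(y-z) dy equals (-1 + √(1 - 4/z))/2 for real z < 0. -/
open Real Filter MeasureTheory Set Topology


private lemma mp_aux1 (z c y sy s4 : ℝ) (hz : z < 0) (hsy : 0 < sy) (hs4 : 0 < s4)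
    (hsy2 : sy ^ 2 = y) (hs42 : s4 ^ 2 = 4 - y) (hc2 : c ^ 2 = 1 - 4 / z) :
    c * z / (2 * sy * s4 * (z - y)) =
      1 / (1 + (c * (sy / s4)) ^ 2) * (c * ((1 * (4 - y) - y * -1) / (4 - y) ^ 2 / (2 * (sy / s4)))) := by
  subst hsy2
  have hzy : z - sy ^ 2 < 0 := by nlinarith
  have hz0 : z ≠ 0 := hz.ne
  rw [show (1:ℝ) * (4 - sy ^ 2) - sy ^ 2 * -1 = 4 from by ring,
    show (4:ℝ) - sy ^ 2 = s4 ^ 2 from hs42.symm, mul_pow, div_pow, hc2]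
  have hden' : 1 + (1 - 4 / z) * (sy ^ 2 / s4 ^ 2) = 4 * (z - sy ^ 2) / (z * s4 ^ 2) := by
    field_simp
    linear_combination z * hs42
  rw [hden']
  field_simp [hzy.ne, hsy.ne', hs4.ne']

private lemma mp_aux3 (z c y sy s4 p : ℝ) (hz : z < 0) (hp : p ≠ 0) (hsy : 0 < sy) (hs4 : 0 < s4)
    (hsy2 : sy ^ 2 = y) (hs42 : s4 ^ 2 = 4 - y) (hc2 : c ^ 2 = 1 - 4 / z) :
    (1 / (p * sy) * (s4 / 2)) / (y - z) =
      1 / p * (c * (c * z / (2 * sy * s4 * (z - y))) - 1 / (2 * sy * s4)) := by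
  subst hsy2
  have hzy : z - sy ^ 2 < 0 := by nlinarith
  have hyz : (0:ℝ) < sy ^ 2 - z := by nlinarith
  have hz0 : z ≠ 0 := hz.ne
  have hc' : c * (c * z / (2 * sy * s4 * (z - sy ^ 2)))
      = (1 - 4 / z) * z / (2 * sy * s4 * (z - sy ^ 2)) := by rw [← hc2]; ring
  rw [hc']
  field_simp [hp, hsy.ne', hs4.ne', hz0, hzy.ne, hyz.ne']
  linear_combination (z - sy ^ 2) * hs42


/-- The Stieltjes transform of the Marchenko–Pastur density
`ρ(y) = (1/(π√y))·√(1 - y/4)` on `(0,4)` equals `(-1 + √(1 - 4/z))/2` for real `z < 0`. -/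
theorem marchenko_pastur_stieltjes (z : ℝ) (hz : z < 0) :
    ∫ y in Set.Ioo (0 : ℝ) 4,
        (1 / (Real.pi * Real.sqrt y) * Real.sqrt (1 - y / 4)) / (y - z) =
      (-1 + Real.sqrt (1 - 4 / z)) / 2 := by
  have hπ : (0:ℝ) < π := Real.pi_pos
  have h4z : 4 / z < 0 := div_neg_of_pos_of_neg (by norm_num) hz
  have hc0 : 0 < Real.sqrt (1 - 4/z) := Real.sqrt_pos.mpr (by linarith)
  set c := Real.sqrt (1 - 4/z) with hcdef
  have hc2 : c ^ 2 = 1 - 4/z := Real.sq_sqrt (by linarith)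
  set f : ℝ → ℝ := fun y => (1 / (π * Real.sqrt y) * Real.sqrt (1 - y / 4)) / (y - z) with hfdef
  set F : ℝ → ℝ := fun y => (1/π) * (c * Real.arctan (c * Real.sqrt (y / (4 - y))) -
      Real.arcsin (Real.sqrt y / 2)) with hFdef
  have hs4eq : Real.sqrt 4 = 2 := by
    rw [show (4:ℝ) = 2^2 by norm_num, Real.sqrt_sq (by norm_num : (0:ℝ) ≤ 2)]
  -- derivative
  have hderiv : ∀ y ∈ Ioo (0:ℝ) 4, HasDerivAt F (f y) y := by
    rintro y ⟨hy0, hy4⟩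
    have h4y : 0 < 4 - y := by linarith
    have hsy : 0 < Real.sqrt y := Real.sqrt_pos.mpr hy0
    have hs4 : 0 < Real.sqrt (4 - y) := Real.sqrt_pos.mpr h4y
    have hsy2 : Real.sqrt y ^ 2 = y := Real.sq_sqrt hy0.le
    have hs42 : Real.sqrt (4 - y) ^ 2 = 4 - y := Real.sq_sqrt h4y.le
    have hu : HasDerivAt (fun x : ℝ => x / (4 - x)) ((1 * (4 - y) - y * (-1)) / (4 - y)^2) y := by
      exact (hasDerivAt_id' (x := y)).div ((hasDerivAt_id' (x := y)).const_sub 4) h4y.ne'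
    have hune : y / (4 - y) ≠ 0 := by positivity
    have hA : HasDerivAt (fun x : ℝ => Real.arctan (c * Real.sqrt (x / (4 - x))))
        (c * z / (2 * Real.sqrt y * Real.sqrt (4 - y) * (z - y))) y := by
      have h := ((hu.sqrt hune).const_mul c).arctan
      convert h using 1
      rw [Real.sqrt_div hy0.le]
      exact mp_aux1 z c y _ _ hz hsy hs4 hsy2 hs42 hc2
    have hBinner : HasDerivAt (fun x : ℝ => Real.sqrt x / 2) (1 / (2 * Real.sqrt y) / 2) y :=
      (Real.hasDerivAt_sqrt hy0.ne').div_const 2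
    have hsylt : Real.sqrt y < 2 := by
      calc Real.sqrt y < Real.sqrt 4 := Real.sqrt_lt_sqrt hy0.le hy4
      _ = 2 := hs4eq
    have hne1 : Real.sqrt y / 2 ≠ 1 := by
      intro h; rw [div_eq_one_iff_eq (by norm_num)] at h; linarith
    have hne1' : Real.sqrt y / 2 ≠ -1 := by
      intro h
      have h2 := Real.sqrt_nonneg y
      rw [div_eq_iff (by norm_num : (2:ℝ) ≠ 0)] at h
      linarith
    have hB : HasDerivAt (fun x : ℝ => Real.arcsin (Real.sqrt x / 2))
        (1 / (2 * Real.sqrt y * Real.sqrt (4 - y))) y := by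
      have h := (Real.hasDerivAt_arcsin hne1' hne1).comp y hBinner
      have h14 : (1:ℝ) - (Real.sqrt y / 2) ^ 2 = (4 - y) / 4 := by
        rw [div_pow, hsy2]; ring
      convert h using 1
      · rfl
      · rfl
      · rfl
      rw [h14, Real.sqrt_div h4y.le, hs4eq]
      rw [div_div_eq_mul_div, one_mul]
      field_simp
    have hFd := (((hA.const_mul c).sub hB).const_mul (1/π))
    convert hFd using 1
    · rfl
    · rfl
    · rfl
    rw [hfdef]
    simp only
    rw [show (1:ℝ) - y/4 = (4 - y)/4 from by ring, Real.sqrt_div h4y.le, hs4eq]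
    exact mp_aux3 z c y _ _ π hz hπ.ne' hsy hs4 hsy2 hs42 hc2
  have hint : IntervalIntegrable f volume 0 4 := by
    have hbase : IntervalIntegrable (fun x : ℝ => x ^ (-(1:ℝ)/2)) volume 0 4 :=
      intervalIntegral.intervalIntegrable_rpow' (by norm_num)
    have hg : IntervalIntegrable (fun x : ℝ => (π * (-z))⁻¹ * x ^ (-(1:ℝ)/2)) volume 0 4 :=
      hbase.const_mul _
    refine hg.mono_fun' ?_ ?_
    · refine Measurable.aestronglyMeasurable ?_
      rw [hfdef]
      exact ((measurable_const.div (measurable_const.mul Real.continuous_sqrt.measurable)).mul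
        (Real.continuous_sqrt.measurable.comp (measurable_const.sub (measurable_id.div_const 4)))).div
        (measurable_id.sub measurable_const)
    · rw [uIoc_of_le (by norm_num : (0:ℝ) ≤ 4)]
      filter_upwards [ae_restrict_mem measurableSet_Ioc] with x hx
      obtain ⟨hx0, hx4⟩ := hx
      have hsx : 0 < Real.sqrt x := Real.sqrt_pos.mpr hx0
      have hxz : 0 < x - z := by linarith
      have hfx : f x = Real.sqrt (1 - x/4) / (π * Real.sqrt x * (x - z)) := by
        rw [hfdef]
        simp only
        rw [one_div, inv_mul_eq_div, div_div]
      have hxr : x ^ (-(1:ℝ)/2) = (Real.sqrt x)⁻¹ := by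
        rw [show (-(1:ℝ)/2) = -(1/2) by norm_num, Real.rpow_neg hx0.le, ← Real.sqrt_eq_rpow]
      rw [Real.norm_eq_abs, abs_of_nonneg (by rw [hfx]; positivity), hfx, hxr]
      have h1 : Real.sqrt (1 - x/4) ≤ 1 := by
        have h2 := Real.sqrt_le_sqrt (show 1 - x/4 ≤ 1 by linarith)
        rwa [Real.sqrt_one] at h2
      calc Real.sqrt (1 - x/4) / (π * Real.sqrt x * (x - z)) ≤ 1 / (π * Real.sqrt x * (-z)) := by
            have hnz : (0:ℝ) < π * Real.sqrt x * (-z) :=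
              mul_pos (mul_pos hπ hsx) (neg_pos.mpr hz)
            refine div_le_div₀ (by norm_num) h1 hnz ?_
            exact mul_le_mul_of_nonneg_left (by linarith) (by positivity)
        _ = (π * (-z))⁻¹ * (Real.sqrt x)⁻¹ := by
            rw [mul_inv]; ring
  have ha : Tendsto F (𝓝[>] (0:ℝ)) (𝓝 0) := by
    have h1 : ContinuousAt (fun x : ℝ => x / (4 - x)) 0 :=
      (continuousAt_id).div (continuousAt_const.sub continuousAt_id) (by norm_num)
    have hAc : ContinuousAt (fun x : ℝ => Real.arctan (c * Real.sqrt (x / (4 - x)))) 0 :=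
      Real.continuous_arctan.continuousAt.comp
        (continuousAt_const.mul (Real.continuous_sqrt.continuousAt.comp h1))
    have hBc : ContinuousAt (fun x : ℝ => Real.arcsin (Real.sqrt x / 2)) 0 :=
      Real.continuous_arcsin.continuousAt.comp (Real.continuous_sqrt.continuousAt.div_const 2)
    have hFc : ContinuousAt F 0 := continuousAt_const.mul ((continuousAt_const.mul hAc).sub hBc)
    have hF0 : F 0 = 0 := by
      rw [hFdef]; simp
    have h'' : Tendsto F (𝓝[>] (0:ℝ)) (𝓝 (F 0)) := hFc.continuousWithinAt
    rwa [hF0] at h''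
  have hb : Tendsto F (𝓝[<] (4:ℝ)) (𝓝 ((1/π) * (c * (π/2) - π/2))) := by
    have h40 : Tendsto (fun x : ℝ => 4 - x) (𝓝[<] (4:ℝ)) (𝓝[>] 0) := by
      refine tendsto_nhdsWithin_of_tendsto_nhds_of_eventually_within _ ?_ ?_
      · have ht : Tendsto (fun x : ℝ => 4 - x) (𝓝 (4:ℝ)) (𝓝 (4 - 4)) :=
          (continuous_const.sub continuous_id).tendsto 4
        have ht' := ht.mono_left (nhdsWithin_le_nhds (s := Iio (4:ℝ)))
        simpa using ht'
      · filter_upwards [self_mem_nhdsWithin] with x (hx : x < 4)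
        exact mem_Ioi.mpr (by linarith)
    have hs40 : Tendsto (fun x : ℝ => Real.sqrt (4 - x)) (𝓝[<] (4:ℝ)) (𝓝[>] 0) := by
      refine tendsto_nhdsWithin_of_tendsto_nhds_of_eventually_within _ ?_ ?_
      · have := (Real.continuous_sqrt.tendsto 0).comp (h40.mono_right nhdsWithin_le_nhds)
        simpa [Function.comp_def] using this
      · filter_upwards [self_mem_nhdsWithin] with x (hx : x < 4)
        exact mem_Ioi.mpr (Real.sqrt_pos.mpr (by linarith))
    have hinv : Tendsto (fun x : ℝ => (Real.sqrt (4 - x))⁻¹) (𝓝[<] (4:ℝ)) atTop :=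
      tendsto_inv_nhdsGT_zero.comp hs40
    have hsq4 : Tendsto (fun x : ℝ => Real.sqrt x) (𝓝[<] (4:ℝ)) (𝓝 2) := by
      have := (Real.continuous_sqrt.tendsto 4).mono_left (nhdsWithin_le_nhds (s := Iio (4:ℝ)))
      simpa [hs4eq] using this
    have hmul : Tendsto (fun x : ℝ => Real.sqrt x * (Real.sqrt (4 - x))⁻¹) (𝓝[<] (4:ℝ)) atTop :=
      hsq4.pos_mul_atTop (by norm_num) hinv
    have hcg : Tendsto (fun x : ℝ => c * Real.sqrt (x / (4 - x))) (𝓝[<] (4:ℝ)) atTop := by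
      refine (hmul.const_mul_atTop hc0).congr' ?_
      filter_upwards [Ioo_mem_nhdsLT_of_mem (by norm_num : (4:ℝ) ∈ Ioc 0 4)] with x hx
      rw [Real.sqrt_div hx.1.le, div_eq_mul_inv]
    have harct : Tendsto (fun x : ℝ => Real.arctan (c * Real.sqrt (x / (4 - x))))
        (𝓝[<] (4:ℝ)) (𝓝 (π/2)) :=
      (Real.tendsto_arctan_atTop.mono_right nhdsWithin_le_nhds).comp hcg
    have harcs : Tendsto (fun x : ℝ => Real.arcsin (Real.sqrt x / 2)) (𝓝[<] (4:ℝ)) (𝓝 (π/2)) := by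
      have hcont : Continuous (fun x : ℝ => Real.arcsin (Real.sqrt x / 2)) :=
        Real.continuous_arcsin.comp (Real.continuous_sqrt.div_const 2)
      have := (hcont.tendsto 4).mono_left (nhdsWithin_le_nhds (s := Iio (4:ℝ)))
      simpa [hs4eq, Real.arcsin_one] using this
    exact ((harct.const_mul c).sub harcs).const_mul (1/π)
  have key := intervalIntegral.integral_eq_sub_of_hasDerivAt_of_tendsto
    (by norm_num : (0:ℝ) < 4) hderiv hint ha hb
  rw [← MeasureTheory.integral_Ioc_eq_integral_Ioo,
    ← intervalIntegral.integral_of_le (by norm_num : (0:ℝ) ≤ 4), key]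
  field_simp
  ring
end

section
/- For a positive integer r, define ρ(x) = (1/(πx)) · x^{1/(r+1)} sin(π/(r+1)) / (1 + 2x^{1/(r+1)} cos(π/(r+1)) + x^{2/(r+1)}) for x > 0. Then ∫_0^∞ ρ(x) dx = 1, i.e. ρ is a probability density on (0,∞). -/
open Real MeasureTheory Set Filter

/-- Key integral: `∫_0^∞ du/(u² + 2u cos θ + 1) = θ / sin θ` for `0 < θ ≤ π/2`. -/
lemma integral_aux {θ : ℝ} (hθ0 : 0 < θ) (hθ : θ ≤ π / 2) :
    ∫ u in Ioi (0 : ℝ), 1 / (u ^ 2 + 2 * u * Real.cos θ + 1) = θ / Real.sin θ := by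
  have hs : 0 < Real.sin θ := Real.sin_pos_of_pos_of_lt_pi hθ0 (lt_of_le_of_lt hθ (half_lt_self Real.pi_pos))
  set s := Real.sin θ with hs_def
  set c := Real.cos θ with hc_def
  have hsc : s ^ 2 + c ^ 2 = 1 := Real.sin_sq_add_cos_sq θ
  have key : ∀ u : ℝ, u ^ 2 + 2 * u * c + 1 = (u + c) ^ 2 + s ^ 2 := by
    intro u; nlinarith [hsc]
  have hderiv : ∀ u ∈ Ici (0 : ℝ),
      HasDerivAt (fun u => Real.arctan ((u + c) / s) / s)
        (1 / (u ^ 2 + 2 * u * c + 1)) u := by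
    intro u _
    have h1 : HasDerivAt (fun u : ℝ => (u + c) / s) (1 / s) u := by
      simpa using ((hasDerivAt_id u).add_const c).div_const s
    have h2 := (Real.hasDerivAt_arctan ((u + c) / s)).comp u h1
    have := h2.div_const s
    refine this.congr_deriv ?_
    rw [key u]
    have hs' : s ≠ 0 := hs.ne'
    field_simp
    ring
  have hpos : ∀ u ∈ Ioi (0 : ℝ), 0 ≤ 1 / (u ^ 2 + 2 * u * c + 1) := by
    intro u _
    rw [key u]
    positivity
  have htend : Tendsto (fun u => Real.arctan ((u + c) / s) / s) atTop
      (nhds ((π / 2) / s)) := by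
    apply Tendsto.div_const
    apply (tendsto_nhds_of_tendsto_nhdsWithin Real.tendsto_arctan_atTop).comp
    apply Tendsto.atTop_div_const hs
    exact tendsto_atTop_add_const_right _ c tendsto_id
  have := integral_Ioi_of_hasDerivAt_of_nonneg' hderiv hpos htend
  rw [this]
  have harct : Real.arctan ((0 + c) / s) = π / 2 - θ := by
    rw [zero_add]
    have : c / s = Real.tan (π / 2 - θ) := by
      rw [Real.tan_eq_sin_div_cos, Real.sin_pi_div_two_sub, Real.cos_pi_div_two_sub]
    rw [this, Real.arctan_tan (by linarith [Real.pi_pos]) (by linarith)]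
  rw [harct]
  field_simp
  ring

/-- The global eigenvalue density of the product Wishart matrix `X_{r,r}† X_{r,r}`,
`ρ(x) = (1/(πx)) x^{1/(r+1)} sin(π/(r+1)) / (1 + 2 x^{1/(r+1)} cos(π/(r+1)) + x^{2/(r+1)})`,
is a probability density on `(0,∞)`. -/
theorem global_density_is_probability (r : ℕ) (hr : 1 ≤ r) :
    ∫ x in Set.Ioi (0 : ℝ),
        (1 / (Real.pi * x)) *
          (x ^ ((1 : ℝ) / ((r : ℝ) + 1)) * Real.sin (Real.pi / ((r : ℝ) + 1))) /
          (1 + 2 * x ^ ((1 : ℝ) / ((r : ℝ) + 1)) * Real.cos (Real.pi / ((r : ℝ) + 1)) +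
            x ^ ((2 : ℝ) / ((r : ℝ) + 1))) = 1 := by
  have hr1 : (1 : ℝ) ≤ (r : ℝ) := by exact_mod_cast hr
  have hrp : (0 : ℝ) < (r : ℝ) + 1 := by linarith
  set θ := π / ((r : ℝ) + 1) with hθ_def
  have hθ0 : 0 < θ := div_pos Real.pi_pos hrp
  have hθle : θ ≤ π / 2 := by
    rw [hθ_def, div_le_div_iff₀ hrp two_pos]
    nlinarith [Real.pi_pos]
  set p : ℝ := 1 / ((r : ℝ) + 1) with hp_def
  have hp0 : 0 < p := by positivity
  set g : ℝ → ℝ := fun u =>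
    (((r : ℝ) + 1) * Real.sin θ / π) * (1 / (u ^ 2 + 2 * u * Real.cos θ + 1)) with hg_def
  have step : ∫ x in Ioi (0 : ℝ),
      (1 / (π * x)) * (x ^ p * Real.sin θ) /
        (1 + 2 * x ^ p * Real.cos θ + x ^ ((2 : ℝ) / ((r : ℝ) + 1)))
      = ∫ x in Ioi (0 : ℝ), (|p| * x ^ (p - 1)) • g (x ^ p) := by
    apply setIntegral_congr_fun measurableSet_Ioi
    intro x hx
    have hx0 : 0 < x := hx
    have hxp : 0 < x ^ p := Real.rpow_pos_of_pos hx0 p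
    have h2 : x ^ ((2 : ℝ) / ((r : ℝ) + 1)) = (x ^ p) ^ 2 := by
      rw [← Real.rpow_natCast (x ^ p) 2, ← Real.rpow_mul hx0.le]
      congr 1
      rw [hp_def]; ring
    have hxp1 : x ^ (p - 1) = x ^ p / x := by
      rw [Real.rpow_sub hx0, Real.rpow_one]
    have hden : 0 < (x ^ p) ^ 2 + 2 * (x ^ p) * Real.cos θ + 1 := by
      have hc : 0 ≤ Real.cos θ := Real.cos_nonneg_of_mem_Icc ⟨by linarith, hθle⟩
      positivity
    rw [abs_of_pos hp0]
    simp only [smul_eq_mul, hg_def, h2, hxp1]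
    have hπ : (0 : ℝ) < π := Real.pi_pos
    have hpr : p * ((r : ℝ) + 1) = 1 := by rw [hp_def]; field_simp
    have hD : 1 + 2 * x ^ p * Real.cos θ + (x ^ p) ^ 2
        = (x ^ p) ^ 2 + 2 * (x ^ p) * Real.cos θ + 1 := by ring
    rw [hD]
    field_simp [hπ.ne', hx0.ne', hden.ne']
    rw [hp_def]
    field_simp
  calc ∫ x in Ioi (0 : ℝ),
        (1 / (π * x)) * (x ^ p * Real.sin θ) /
          (1 + 2 * x ^ p * Real.cos θ + x ^ ((2 : ℝ) / ((r : ℝ) + 1)))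
      = ∫ x in Ioi (0 : ℝ), (|p| * x ^ (p - 1)) • g (x ^ p) := step
    _ = ∫ u in Ioi (0 : ℝ), g u := integral_comp_rpow_Ioi g hp0.ne'
    _ = (((r : ℝ) + 1) * Real.sin θ / π) *
          ∫ u in Ioi (0 : ℝ), 1 / (u ^ 2 + 2 * u * Real.cos θ + 1) := by
        rw [← integral_const_mul]
    _ = 1 := by
        rw [integral_aux hθ0 hθle]
        have hs : Real.sin θ ≠ 0 :=
          (Real.sin_pos_of_pos_of_lt_pi hθ0 (lt_of_le_of_lt hθle (by linarith [Real.pi_pos]))).ne'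
        rw [hθ_def]
        field_simp
        exact div_self hs
end
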